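/- Convergence rate for polynomial optimization: Let m ≥ 2 and h = (h₁,…,h_r) ∈ ℝ[x₁,…,x_m]^r with S(h) nonempty and S(h) ⊆ [−1,1]^m, and assume the effective Putinar hypothesis holds for (h, γ, Ł). Let f ∈ ℝ[x₁,…,x_m] with deg(f) ≥ 1, set f*_X := min_{S(h)} f, ‖f‖ := sup_{[−1,1]^m} |f|, and f^ℓ_X := sup{w ∈ ℝ : f − w ∈ Q_ℓ(h)}. Then for every integer ℓ ≥ 1 with ℓ ≥ γ·(deg f)^{3.5mŁ}·3^{2.5mŁ}, one has 0 ≤ f*_X − f^ℓ_X ≤ (γ/ℓ)^{1/(2.5mŁ)}·3‖f‖·(deg f)^{7/5}. -/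

import Mathlib

open MvPolynomial

/-- A polynomial is a sum of squares. -/
def IsSOS {σ : Type*} (q : MvPolynomial σ ℝ) : Prop :=
  ∃ (k : ℕ) (p : Fin k → MvPolynomial σ ℝ), q = ∑ i, (p i) ^ 2

/-- Membership in the truncated quadratic module `Q_ℓ(h)`. -/
def memQM {σ : Type*} {r : ℕ} (h : Fin r → MvPolynomial σ ℝ) (ℓ : ℕ)
    (q : MvPolynomial σ ℝ) : Prop :=
  ∃ (σ₀ : MvPolynomial σ ℝ) (s : Fin r → MvPolynomial σ ℝ),
    IsSOS σ₀ ∧ (∀ i, IsSOS (s i)) ∧ σ₀.totalDegree ≤ 2 * ℓ ∧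
    (∀ i, (s i * h i).totalDegree ≤ 2 * ℓ) ∧ q = σ₀ + ∑ i, s i * h i

/-- The basic closed semialgebraic set `S(h)`. -/
def semialgSet {σ : Type*} {r : ℕ} (h : Fin r → MvPolynomial σ ℝ) :
    Set (σ → ℝ) := {x | ∀ i, 0 ≤ eval x (h i)}

/-- The box `[-1,1]^σ`. -/
def unitBox (σ : Type*) : Set (σ → ℝ) := {x | ∀ i, x i ∈ Set.Icc (-1 : ℝ) 1}

/-- `‖p‖ := sup_{[-1,1]^m} |p|`. -/
noncomputable def polyNorm {σ : Type*} (p : MvPolynomial σ ℝ) : ℝ :=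
  ⨆ x : unitBox σ, |eval (x : σ → ℝ) p|

/-- `min_S p`. -/
noncomputable def polyMinOn {σ : Type*} (S : Set (σ → ℝ)) (p : MvPolynomial σ ℝ) : ℝ :=
  sInf ((fun x => eval x p) '' S)

/-- The effective Putinar hypothesis for `(h, γ, L)`. -/
def EffectivePutinar {σ : Type*} {r : ℕ} (m : ℕ) (h : Fin r → MvPolynomial σ ℝ)
    (γ L : ℝ) : Prop :=
  ∀ (p : MvPolynomial σ ℝ) (ℓ : ℕ),
    0 < polyMinOn (semialgSet h) p →
    γ * (p.totalDegree : ℝ) ^ (3.5 * (m : ℝ) * L) *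
        (polyNorm p / polyMinOn (semialgSet h) p) ^ (2.5 * (m : ℝ) * L) ≤ (ℓ : ℝ) →
    memQM h ℓ p

/-! ### Auxiliary lemmas -/

lemma unitBox_eq (σ : Type*) :
    unitBox σ = Set.pi Set.univ (fun _ : σ => Set.Icc (-1 : ℝ) 1) := by
  ext x
  simp only [unitBox, Set.mem_setOf_eq, Set.mem_univ_pi]

lemma isCompact_unitBox (σ : Type*) : IsCompact (unitBox σ) := by
  rw [unitBox_eq]; exact isCompact_univ_pi fun _ => isCompact_Icc

lemma zero_mem_unitBox (σ : Type*) : (0 : σ → ℝ) ∈ unitBox σ := by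
  intro i; constructor <;> norm_num

lemma bddAbove_absEval {σ : Type*} (p : MvPolynomial σ ℝ) :
    BddAbove (Set.range fun x : unitBox σ => |eval (x : σ → ℝ) p|) := by
  refine BddAbove.mono ?_
    (((isCompact_unitBox σ).image ((MvPolynomial.continuous_eval p).abs)).bddAbove)
  rintro y ⟨x, rfl⟩
  exact ⟨x, x.2, rfl⟩

lemma abs_eval_le_polyNorm {σ : Type*} (p : MvPolynomial σ ℝ) {x : σ → ℝ}
    (hx : x ∈ unitBox σ) : |eval x p| ≤ polyNorm p :=
  le_ciSup (bddAbove_absEval p) (⟨x, hx⟩ : unitBox σ)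

lemma polyNorm_nonneg {σ : Type*} (p : MvPolynomial σ ℝ) : 0 ≤ polyNorm p :=
  le_trans (abs_nonneg _) (abs_eval_le_polyNorm p (zero_mem_unitBox σ))

lemma polyNorm_le {σ : Type*} (p : MvPolynomial σ ℝ) {B : ℝ}
    (hB : ∀ x ∈ unitBox σ, |eval x p| ≤ B) : polyNorm p ≤ B := by
  haveI : Nonempty (unitBox σ) := ⟨⟨0, zero_mem_unitBox σ⟩⟩
  exact ciSup_le fun x => hB x x.2

lemma IsSOS.eval_nonneg {σ : Type*} {q : MvPolynomial σ ℝ} (hq : IsSOS q)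
    (x : σ → ℝ) : 0 ≤ eval x q := by
  obtain ⟨k, p, rfl⟩ := hq
  rw [map_sum]
  exact Finset.sum_nonneg fun i _ => by rw [map_pow]; exact sq_nonneg _

lemma memQM_eval_nonneg {σ : Type*} {r : ℕ} {h : Fin r → MvPolynomial σ ℝ}
    {ℓ : ℕ} {q : MvPolynomial σ ℝ} (hq : memQM h ℓ q) {x : σ → ℝ}
    (hx : x ∈ semialgSet h) : 0 ≤ eval x q := by
  obtain ⟨σ₀, s, hσ₀, hs, -, -, rfl⟩ := hq
  rw [map_add, map_sum]
  refine add_nonneg (hσ₀.eval_nonneg x) (Finset.sum_nonneg fun i _ => ?_)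
  rw [map_mul]
  exact mul_nonneg ((hs i).eval_nonneg x) (hx i)

lemma eval_aeval_line {m : ℕ} (a : Fin m → ℝ) (f : MvPolynomial (Fin m) ℝ) (t : ℝ) :
    Polynomial.eval t (MvPolynomial.aeval (fun i => Polynomial.C (a i) * Polynomial.X) f)
      = eval (fun i => a i * t) f := by
  induction f using MvPolynomial.induction_on with
  | C c => simp
  | add p q hp hq => simp [hp, hq]
  | mul_X p i hp => simp [hp]

lemma eq_zero_of_vanish_unitBox {m : ℕ} (f : MvPolynomial (Fin m) ℝ)
    (hf : ∀ x ∈ unitBox (Fin m), eval x f = 0) : f = 0 := by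
  apply MvPolynomial.funext
  intro a
  rw [map_zero]
  set qa : Polynomial ℝ :=
    MvPolynomial.aeval (fun i => Polynomial.C (a i) * Polynomial.X) f with hqa
  have key : ∀ t : ℝ, Polynomial.eval t qa = eval (fun i => a i * t) f := fun t =>
    eval_aeval_line a f t
  set M : ℝ := 1 + ∑ i, |a i| with hM
  have hM1 : 1 ≤ M := by
    rw [hM]
    have : 0 ≤ ∑ i, |a i| := Finset.sum_nonneg fun i _ => abs_nonneg _
    linarith
  have hM0 : 0 < M := lt_of_lt_of_le one_pos hM1
  have haM : ∀ i, |a i| ≤ M := by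
    intro i
    have : |a i| ≤ ∑ j, |a j| :=
      Finset.single_le_sum (fun j _ => abs_nonneg (a j)) (Finset.mem_univ i)
    rw [hM]; linarith
  have hroot : ∀ t ∈ Set.Icc (-(1/M)) (1/M), qa.IsRoot t := by
    intro t ht
    have hat : ∀ i, |a i * t| ≤ 1 := by
      intro i
      rw [abs_mul]
      have h1 : |t| ≤ 1 / M := abs_le.mpr ht
      calc |a i| * |t| ≤ M * (1 / M) :=
            mul_le_mul (haM i) h1 (abs_nonneg t) hM0.le
        _ = 1 := by field_simp
    have hmem : (fun i => a i * t) ∈ unitBox (Fin m) := fun i => abs_le.mp (hat i)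
    show Polynomial.eval t qa = 0
    rw [key t]
    exact hf _ hmem
  have hqa0 : qa = 0 := by
    apply Polynomial.eq_zero_of_infinite_isRoot
    have hinf : (Set.Icc (-(1/M)) (1/M)).Infinite := by
      apply Set.Icc_infinite
      have : 0 < 1 / M := by positivity
      linarith
    exact hinf.mono fun t ht => hroot t ht
  have := key 1
  rw [hqa0] at this
  simp at this
  simpa using this.symm

/-- **Convergence rate for polynomial optimization.** -/
theorem pop_convergence_rate
    {m r : ℕ} (hm : 2 ≤ m) (h : Fin r → MvPolynomial (Fin m) ℝ)
    (hne : (semialgSet h).Nonempty)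
    (hsub : semialgSet h ⊆ unitBox (Fin m))
    (γ L : ℝ) (hγ : 1 ≤ γ) (hL : 1 ≤ L)
    (hput : EffectivePutinar m h γ L)
    (f : MvPolynomial (Fin m) ℝ) (hdeg : 1 ≤ f.totalDegree)
    (ℓ : ℕ) (hℓ1 : 1 ≤ ℓ)
    (hℓ : γ * (f.totalDegree : ℝ) ^ (3.5 * (m : ℝ) * L) *
        (3 : ℝ) ^ (2.5 * (m : ℝ) * L) ≤ (ℓ : ℝ)) :
    0 ≤ polyMinOn (semialgSet h) f - sSup {w : ℝ | memQM h ℓ (f - C w)} ∧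
      polyMinOn (semialgSet h) f - sSup {w : ℝ | memQM h ℓ (f - C w)} ≤
        (γ / ℓ) ^ (1 / (2.5 * (m : ℝ) * L)) * 3 * polyNorm f *
          (f.totalDegree : ℝ) ^ ((7 : ℝ) / 5) := by
  -- basic positivity facts
  have hγ0 : (0 : ℝ) < γ := lt_of_lt_of_le one_pos hγ
  have hℓ0 : (0 : ℝ) < (ℓ : ℝ) := by exact_mod_cast hℓ1
  have hm2 : (2 : ℝ) ≤ (m : ℝ) := by exact_mod_cast hm
  have hc0 : (0 : ℝ) < 2.5 * (m : ℝ) * L := by nlinarith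
  set c : ℝ := 2.5 * (m : ℝ) * L with hc
  have hd1 : (1 : ℝ) ≤ (f.totalDegree : ℝ) := by exact_mod_cast hdeg
  set d : ℝ := (f.totalDegree : ℝ) with hd
  have hd0 : (0 : ℝ) < d := lt_of_lt_of_le one_pos hd1
  set N : ℝ := polyNorm f with hNdef
  have hN0 : (0 : ℝ) < N := by
    rcases (polyNorm_nonneg f).lt_or_eq with hlt | heq
    · exact hlt
    · exfalso
      have hf0 : f = 0 := by
        apply eq_zero_of_vanish_unitBox
        intro x hx
        have := abs_eval_le_polyNorm f hx
        rw [← heq] at this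
        exact abs_eq_zero.mp (le_antisymm this (abs_nonneg _))
      rw [hf0] at hdeg
      simp [MvPolynomial.totalDegree_zero] at hdeg
  -- the set S and its compactness
  set S : Set (Fin m → ℝ) := semialgSet h with hS
  have hSclosed : IsClosed S := by
    have : S = ⋂ i, (fun x => eval x (h i)) ⁻¹' Set.Ici 0 := by
      ext x; simp [hS, semialgSet, Set.mem_iInter]
    rw [this]
    exact isClosed_iInter fun i => isClosed_Ici.preimage (MvPolynomial.continuous_eval (h i))
  have hScomp : IsCompact S :=
    (isCompact_unitBox (Fin m)).of_isClosed_subset hSclosed hsub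
  -- polyMinOn facts
  have himg : ∀ p : MvPolynomial (Fin m) ℝ, BddBelow ((fun x => eval x p) '' S) :=
    fun p => (hScomp.image (MvPolynomial.continuous_eval p)).bddBelow
  have hminle : ∀ (p : MvPolynomial (Fin m) ℝ) (x : Fin m → ℝ), x ∈ S →
      polyMinOn S p ≤ eval x p := fun p x hx => csInf_le (himg p) ⟨x, hx, rfl⟩
  have hlemin : ∀ (p : MvPolynomial (Fin m) ℝ) (b : ℝ),
      (∀ x ∈ S, b ≤ eval x p) → b ≤ polyMinOn S p := fun p b hb =>
    le_csInf (Set.Nonempty.image _ hne) (by rintro y ⟨x, hx, rfl⟩; exact hb x hx)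
  -- |polyMinOn S f| ≤ N
  obtain ⟨x₀, hx₀⟩ := id hne
  have habs_min : |polyMinOn S f| ≤ N := by
    rw [abs_le]
    constructor
    · refine hlemin f (-N) fun x hx => ?_
      have h1 : |eval x f| ≤ N := abs_eval_le_polyNorm f (hsub hx)
      have h2 : -|eval x f| ≤ eval x f := neg_abs_le _
      linarith
    · calc polyMinOn S f ≤ eval x₀ f := hminle f x₀ hx₀
        _ ≤ |eval x₀ f| := le_abs_self _
        _ ≤ N := abs_eval_le_polyNorm f (hsub hx₀)
  -- shift lemma for polyMinOn
  have hshift : ∀ w : ℝ, polyMinOn S (f - C w) = polyMinOn S f - w := by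
    intro w
    have heval : ∀ x : Fin m → ℝ, eval x (f - C w) = eval x f - w := by
      intro x; simp [map_sub]
    apply le_antisymm
    · have h1 : polyMinOn S (f - C w) + w ≤ polyMinOn S f := by
        refine le_csInf (Set.Nonempty.image _ hne) ?_
        rintro y ⟨x, hx, rfl⟩
        have := hminle (f - C w) x hx
        rw [heval x] at this
        linarith
      linarith
    · refine hlemin (f - C w) _ fun x hx => ?_
      rw [heval x]
      have := hminle f x hx
      linarith
  -- key quantities
  set k : ℝ := (γ / (ℓ : ℝ)) ^ (1 / c) with hk
  have hk0 : (0 : ℝ) < k := Real.rpow_pos_of_pos (div_pos hγ0 hℓ0) _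
  set A : ℝ := d ^ ((7 : ℝ) / 5) with hA
  have hA0 : (0 : ℝ) < A := Real.rpow_pos_of_pos hd0 _
  have hA1 : (1 : ℝ) ≤ A := Real.one_le_rpow hd1 (by norm_num)
  have hEc : 3.5 * (m : ℝ) * L = (7 : ℝ) / 5 * c := by rw [hc]; ring
  have hdA : d ^ (3.5 * (m : ℝ) * L) = A ^ c := by
    rw [hEc, Real.rpow_mul hd0.le, hA]
  have hℓ' : γ * A ^ c * (3 : ℝ) ^ c ≤ (ℓ : ℝ) := by
    rw [← hdA]; exact hℓ
  have hkc : k ^ c = γ / (ℓ : ℝ) := by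
    rw [hk, ← Real.rpow_mul (div_pos hγ0 hℓ0).le, one_div_mul_cancel hc0.ne',
      Real.rpow_one]
  have h3c : (0:ℝ) < (3:ℝ) ^ c := Real.rpow_pos_of_pos (by norm_num) _
  have hAc : (0:ℝ) < A ^ c := Real.rpow_pos_of_pos hA0 _
  -- k ≤ 1/(3A)
  have hk_le : k ≤ 1 / (3 * A) := by
    have h3A : ((1:ℝ) / (3 * A)) ^ c = 1 / ((3:ℝ) ^ c * A ^ c) := by
      rw [one_div, Real.inv_rpow (by positivity), Real.mul_rpow (by norm_num) hA0.le,
        one_div]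
    have h1 : γ / (ℓ : ℝ) ≤ (1 / (3 * A)) ^ c := by
      rw [h3A, div_le_div_iff₀ hℓ0 (by positivity)]
      nlinarith [hℓ']
    have h2 : k ≤ ((1 / (3 * A)) ^ c) ^ (1 / c) :=
      Real.rpow_le_rpow (div_pos hγ0 hℓ0).le h1 (by positivity)
    calc k ≤ ((1 / (3 * A)) ^ c) ^ (1 / c) := h2
      _ = (1 / (3 * A)) ^ (c * (1 / c)) := (Real.rpow_mul (by positivity) c (1/c)).symm
      _ = 1 / (3 * A) := by
          rw [mul_one_div_cancel hc0.ne', Real.rpow_one]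
  -- the candidate lower bound
  set ε : ℝ := k * 3 * N * A with hε
  have hε0 : (0:ℝ) < ε := by positivity
  have hεN : ε ≤ N := by
    have : k * (3 * N * A) ≤ (1 / (3 * A)) * (3 * N * A) :=
      mul_le_mul_of_nonneg_right hk_le (by positivity)
    have heq : (1 / (3 * A)) * (3 * N * A) = N := by field_simp
    rw [heq] at this
    calc ε = k * (3 * N * A) := by rw [hε]; ring
      _ ≤ N := this
  set w : ℝ := polyMinOn S f - ε with hw
  set p : MvPolynomial (Fin m) ℝ := f - C w with hp
  have hpmin : polyMinOn S p = ε := by rw [hp, hshift w, hw]; ring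
  -- degree bound
  have hpdeg : (p.totalDegree : ℝ) ≤ d := by
    have : p.totalDegree ≤ f.totalDegree := by
      rw [hp, sub_eq_add_neg, ← MvPolynomial.C_neg]
      calc (f + C (-w)).totalDegree ≤ max f.totalDegree (C (-w) : MvPolynomial (Fin m) ℝ).totalDegree :=
            MvPolynomial.totalDegree_add f (C (-w))
        _ = f.totalDegree := by rw [MvPolynomial.totalDegree_C]; exact max_eq_left (Nat.zero_le _)
    rw [hd]
    exact_mod_cast this
  -- norm bound
  have hwabs : |w| ≤ 2 * N := by
    rw [hw]
    calc |polyMinOn S f - ε| ≤ |polyMinOn S f| + |ε| := abs_sub _ _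
      _ ≤ N + N := add_le_add habs_min (by rw [abs_of_pos hε0]; exact hεN)
      _ = 2 * N := by ring
  have hpnorm : polyNorm p ≤ 3 * N := by
    apply polyNorm_le
    intro x hx
    have h1 : eval x p = eval x f - w := by rw [hp]; simp [map_sub]
    rw [h1]
    calc |eval x f - w| ≤ |eval x f| + |w| := abs_sub _ _
      _ ≤ N + 2 * N := add_le_add (abs_eval_le_polyNorm f hx) hwabs
      _ = 3 * N := by ring
  -- apply effective Putinar
  have hput_cond : γ * (p.totalDegree : ℝ) ^ (3.5 * (m : ℝ) * L) *
      (polyNorm p / polyMinOn S p) ^ c ≤ (ℓ : ℝ) := by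
    rw [hpmin]
    have hb1 : (p.totalDegree : ℝ) ^ (3.5 * (m : ℝ) * L) ≤ A ^ c := by
      rw [← hdA]
      exact Real.rpow_le_rpow (Nat.cast_nonneg _) hpdeg (by positivity)
    have hpn0 : 0 ≤ polyNorm p := polyNorm_nonneg p
    have hb2 : (polyNorm p / ε) ^ c ≤ (3 * N / ε) ^ c := by
      apply Real.rpow_le_rpow (div_nonneg hpn0 hε0.le) ?_ (by positivity)
      gcongr
    have hb3 : (3 * N / ε) ^ c = ((ℓ:ℝ) / γ) / A ^ c := by
      have he : 3 * N / ε = 1 / (k * A) := by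
        rw [hε]; field_simp
      rw [he, one_div, Real.inv_rpow (by positivity), Real.mul_rpow hk0.le hA0.le, hkc]
      field_simp
    calc γ * (p.totalDegree : ℝ) ^ (3.5 * (m : ℝ) * L) * (polyNorm p / ε) ^ c
        ≤ γ * A ^ c * ((3 * N / ε) ^ c) := by
          apply mul_le_mul (mul_le_mul_of_nonneg_left hb1 hγ0.le) hb2
            (Real.rpow_nonneg (div_nonneg hpn0 hε0.le) c) (by positivity)
      _ = γ * A ^ c * (((ℓ:ℝ) / γ) / A ^ c) := by rw [hb3]
      _ = (ℓ : ℝ) := by field_simp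
  have hwmem : memQM h ℓ p := hput p ℓ (by rw [hpmin]; exact hε0) hput_cond
  -- the set W of feasible w
  set W : Set ℝ := {w : ℝ | memQM h ℓ (f - C w)} with hW
  have hwW : w ∈ W := by rw [hW]; exact hwmem
  have hWub : ∀ v ∈ W, v ≤ polyMinOn S f := by
    intro v hv
    have hv' : memQM h ℓ (f - C v) := hv
    refine hlemin f v fun x hx => ?_
    have h0 : 0 ≤ eval x (f - C v) := memQM_eval_nonneg hv' hx
    have heq : eval x (f - C v) = eval x f - v := by simp [map_sub]
    rw [heq] at h0
    linarith
  have hsup_le : sSup W ≤ polyMinOn S f := csSup_le ⟨w, hwW⟩ hWub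
  have hle_sup : w ≤ sSup W := le_csSup ⟨polyMinOn S f, hWub⟩ hwW
  constructor
  · linarith
  · show polyMinOn S f - sSup W ≤ k * 3 * N * A
    have : k * 3 * N * A = ε := by rw [hε]
    rw [this]
    linarith
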